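/- Let p be a word over the alphabet {x, x^R, y, y^R} and let G(p) be the graph on vertex set {x, x^R, y, y^R} with an edge between a^R and b (where (x)^R := x^R, (x^R)^R := x, etc.) whenever ab is a length-2 factor of p. Then some instance of p (the image of p under a non-erasing morphism h: {x,y}* → {0,1}* extended by h(x^R) = h(x)^R, h(y^R) = h(y)^R) is a factor of (01)^ω if and only if G(p) is bipartite (equivalently, 2-colorable). -/

import Mathlib

def IsFactor {α : Type*} (u : List α) (w : ℕ → α) : Prop :=
  ∃ i, u = (List.range u.length).map fun j => w (i + j)

def alt : ℕ → Fin 2 := fun n => if n % 2 = 0 then 0 else 1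

/-- The pattern alphabet `{x, x^R, y, y^R}`. -/
inductive PatSym | x | xR | y | yR
deriving DecidableEq

/-- The involution `a ↦ a^R` on the pattern alphabet. -/
def PatSym.rev : PatSym → PatSym
  | .x => .xR | .xR => .x | .y => .yR | .yR => .y

/-- Image of a pattern letter under the reversal-respecting morphism determined
by `hx = h(x)`, `hy = h(y)`. -/
def PatSym.img (hx hy : List (Fin 2)) : PatSym → List (Fin 2)
  | .x => hx | .xR => hx.reverse | .y => hy | .yR => hy.reverse

/-- The adjacency relation of the graph `G(p)`: an edge joins `a^R` and `b`
whenever `ab` is a length-2 factor of `p` (symmetrized; loops allowed). -/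
def Adj (p : List PatSym) (a b : PatSym) : Prop :=
  ∃ c d : PatSym, [c, d] <:+: p ∧ ((c.rev = a ∧ d = b) ∨ (c.rev = b ∧ d = a))

/-! A binary word is a factor of `(01)^ω` exactly when no two consecutive letters agree. In the
image of `p`, a factor `ab` of `p` creates a junction between the last letter of `h(a)`, which is
the first letter of `h(a^R)`, and the first letter of `h(b)`. Hence colouring each pattern letter
by the first letter of its image properly 2-colours `G(p)`. Conversely, a colouring `c` is realised
by the alternating words running from `c x` to `c x^R` and from `c y` to `c y^R`. -/

lemma List.isChain_iff_forall_pair_infix {α : Type*} {R : α → α → Prop} {l : List α} :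
    l.IsChain R ↔ ∀ a b, [a, b] <:+: l → R a b :=
  ⟨fun h _ _ hab => List.isChain_pair.mp (h.infix hab), fun h => (List.isChain_isInfix l).imp h⟩

lemma isFactor_iff_forall_getElem {α : Type*} {u : List α} {w : ℕ → α} :
    IsFactor u w ↔ ∃ i, ∀ k (hk : k < u.length), u[k] = w (i + k) := by
  simp [IsFactor, List.ext_getElem_iff]

lemma alt_succ (n : ℕ) : alt (n + 1) = alt n + 1 := by
  rcases Nat.mod_two_eq_zero_or_one n with h | h <;> simp [alt, Nat.succ_mod_two_eq_zero_iff, h]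

lemma alt_val (a : Fin 2) : alt a.val = a := by
  fin_cases a <;> rfl

lemma Fin.two_ne_iff_eq_add_one {a b : Fin 2} : a ≠ b ↔ b = a + 1 := by
  revert a b; decide

lemma isFactor_alt_iff_isChain_ne {u : List (Fin 2)} :
    IsFactor u alt ↔ u.IsChain (· ≠ ·) := by
  simp only [isFactor_iff_forall_getElem, List.isChain_iff_getElem, Fin.two_ne_iff_eq_add_one]
  constructor
  · rintro ⟨i, hi⟩ k hk
    rw [hi, hi, ← alt_succ, Nat.add_assoc]
  · intro h
    rcases u with _ | ⟨a, l⟩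
    · exact ⟨0, nofun⟩
    refine ⟨a.val, fun k hk => ?_⟩
    induction k with
    | zero => exact (alt_val a).symm
    | succ k ih => rw [h k hk, ih (by omega), ← alt_succ, Nat.add_assoc]

lemma exists_isChain_ne_head?_getLast? (a b : Fin 2) :
    ∃ w : List (Fin 2), w.IsChain (· ≠ ·) ∧ w.head? = some a ∧ w.getLast? = some b := by
  by_cases hab : a = b
  · exact ⟨[a], by simp [hab]⟩
  · exact ⟨[a, b], by simpa using hab⟩

namespace PatSym

lemma img_rev (hx hy : List (Fin 2)) (a : PatSym) : img hx hy a.rev = (img hx hy a).reverse := by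
  cases a <;> simp [rev, img]

lemma img_ne_nil {hx hy : List (Fin 2)} (hx0 : hx ≠ []) (hy0 : hy ≠ []) (a : PatSym) :
    img hx hy a ≠ [] := by
  cases a <;> simp [img, hx0, hy0]

lemma forall_adj_iff {p : List PatSym} {S : PatSym → PatSym → Prop} (hS : ∀ a b, S a b → S b a) :
    (∀ a b, Adj p a b → S a b) ↔ ∀ c d, [c, d] <:+: p → S c.rev d := by
  refine ⟨fun h c d hcd => h _ _ ⟨c, d, hcd, .inl ⟨rfl, rfl⟩⟩, ?_⟩
  rintro h a b ⟨c, d, hcd, ⟨rfl, rfl⟩ | ⟨rfl, rfl⟩⟩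
  · exact h c d hcd
  · exact hS _ _ (h c d hcd)

lemma isChain_flatMap_img_iff {hx hy : List (Fin 2)} {col : PatSym → Fin 2}
    (hcol : ∀ a, (img hx hy a).head? = some (col a)) (p : List PatSym) :
    (p.flatMap (img hx hy)).IsChain (· ≠ ·) ↔
      (∀ a ∈ p, (img hx hy a).IsChain (· ≠ ·)) ∧ ∀ a b, Adj p a b → col a ≠ col b := by
  have hlast (a : PatSym) : (img hx hy a).getLast? = some (col a.rev) := by
    rw [← hcol, img_rev, List.head?_reverse]
  have hne : [] ∉ p.map (img hx hy) := by
    rw [List.mem_map]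
    rintro ⟨a, -, ha⟩
    simpa [ha] using hcol a
  rw [List.flatMap_def, List.isChain_flatten hne, List.forall_mem_map, List.isChain_map,
    List.isChain_iff_forall_pair_infix, forall_adj_iff fun _ _ => Ne.symm]
  simp [hlast, hcol]

end PatSym

/-- An instance of the pattern `p` occurs in `(01)^ω` iff the graph `G(p)` is
bipartite (has a proper 2-coloring). -/
theorem stmt11 (p : List PatSym) :
    (∃ hx hy : List (Fin 2), hx ≠ [] ∧ hy ≠ [] ∧
        IsFactor (p.flatMap (PatSym.img hx hy)) alt) ↔
      (∃ c : PatSym → Fin 2, ∀ a b : PatSym, Adj p a b → c a ≠ c b) := by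
  simp only [isFactor_alt_iff_isChain_ne]
  constructor
  · rintro ⟨hx, hy, hx0, hy0, hchain⟩
    have hne := PatSym.img_ne_nil hx0 hy0
    exact ⟨fun a => (PatSym.img hx hy a).head (hne a),
      ((PatSym.isChain_flatMap_img_iff (fun a => List.head?_eq_some_head (hne a)) p).mp hchain).2⟩
  · rintro ⟨c, hc⟩
    obtain ⟨wx, hwx, hwx_head, hwx_last⟩ := exists_isChain_ne_head?_getLast? (c .x) (c .xR)
    obtain ⟨wy, hwy, hwy_head, hwy_last⟩ := exists_isChain_ne_head?_getLast? (c .y) (c .yR)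
    have hhead (a : PatSym) : (PatSym.img wx wy a).head? = some (c a) := by
      cases a <;> simp [PatSym.img, List.head?_reverse, *]
    have hchain (a : PatSym) : (PatSym.img wx wy a).IsChain (· ≠ ·) := by
      cases a <;> simp [PatSym.img, List.isChain_reverse, ne_comm, *]
    exact ⟨wx, wy, List.ne_nil_of_mem (List.mem_of_head? hwx_head),
      List.ne_nil_of_mem (List.mem_of_head? hwy_head),
      (PatSym.isChain_flatMap_img_iff hhead p).mpr ⟨fun a _ => hchain a, hc⟩⟩
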